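/- The minimum degree of G₂ is δ(G₂) = ∏_{i=1}^{m−1} (p_i − 1), and this minimum is attained exactly by the vertices x with Z(x) = {1,…,m−1} (i.e., the class X_{{1,…,m}∖{m}}). -/

import Mathlib

/-!
Through the Chinese remainder theorem `ℤ/nℤ ≅ ∏ᵢ 𝔽_{pᵢ}`, the conditions `x ≠ 0`, `IsUnit x` and
`(x, y) = ℤ/nℤ` become `Z(x) ≠ univ`, `Z(x) = ∅` and `Z(x) ∩ Z(y) = ∅`. The neighbours of a
vertex with zero-set `S` are thus the elements nonzero on `S` minus the units, which number
`F(S) - F(univ)` with `F(S) = ∏_{i ∈ S} (pᵢ - 1) ∏_{i ∉ S} pᵢ` (`prodSubOneOn p S`). As `F`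
strictly decreases when `S` grows, the minimum over proper `S` is attained at some
`S = univ \ {j}`, where the degree is `∏_{i ≠ j} (pᵢ - 1)`; this is smallest exactly when `p_j`
is the largest prime.
-/

open Finset

abbrev NN (m : ℕ) (p : Fin m → ℕ) : ℕ := ∏ i, p i

abbrev Vtx (m : ℕ) (p : Fin m → ℕ) : Type :=
  {x : ZMod (NN m p) // x ≠ 0 ∧ ¬ IsUnit x}

/-- The induced subgraph `G₂` of the comaximal graph of `ℤ/nℤ` on nonzero nonunits. -/
def G2 (m : ℕ) (p : Fin m → ℕ) : SimpleGraph (Vtx m p) where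
  Adj x y := x ≠ y ∧ Ideal.span ({x.1, y.1} : Set (ZMod (NN m p))) = ⊤
  symm := by
    constructor
    rintro x y ⟨hxy, h⟩
    exact ⟨hxy.symm, by rwa [Set.pair_comm]⟩
  loopless := by constructor; rintro x ⟨h, -⟩; exact h rfl

/-- The zero-set of `x`: indices `i` where the image of `x` in `ℤ/p_iℤ` is zero. -/
def Z (m : ℕ) (p : Fin m → ℕ) (x : ZMod (NN m p)) : Finset (Fin m) :=
  Finset.univ.filter fun i =>
    (ZMod.castHom (Finset.dvd_prod_of_mem p (Finset.mem_univ i)) (ZMod (p i))) x = 0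

/-- The class `X_S` of vertices of `G₂` with zero-set `S`. -/
def XS (m : ℕ) (p : Fin m → ℕ) (S : Finset (Fin m)) : Set (Vtx m p) :=
  {x | Z m p x.1 = S}

/-- Minimum degree of a graph. -/
noncomputable def minDeg {V : Type*} (G : SimpleGraph V) : ℕ :=
  sInf {d | ∃ x, (G.neighborSet x).ncard = d}

section ProdSubOneOn
variable {ι : Type*} [Fintype ι] [DecidableEq ι] {a : ι → ℕ}

lemma prod_erase_lt_prod_erase {f : ι → ℕ} (hf : ∀ i, 0 < f i) {j k : ι} (hjk : f j < f k) :
    ∏ i ∈ univ.erase k, f i < ∏ i ∈ univ.erase j, f i := by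
  have hmul : (∏ i ∈ univ.erase k, f i) * f k = (∏ i ∈ univ.erase j, f i) * f j := by
    rw [prod_erase_mul _ _ (mem_univ k), prod_erase_mul _ _ (mem_univ j)]
  by_contra! hle
  have hpos : 0 < ∏ i ∈ univ.erase j, f i := prod_pos fun i _ => hf i
  refine hmul.not_gt ?_
  calc (∏ i ∈ univ.erase j, f i) * f j < (∏ i ∈ univ.erase j, f i) * f k :=
        Nat.mul_lt_mul_of_pos_left hjk hpos
    _ ≤ (∏ i ∈ univ.erase k, f i) * f k := Nat.mul_le_mul_right _ hle

def prodSubOneOn (a : ι → ℕ) (S : Finset ι) : ℕ := ∏ i, if i ∈ S then a i - 1 else a i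

lemma prodSubOneOn_le_of_subset {S T : Finset ι} (h : S ⊆ T) :
    prodSubOneOn a T ≤ prodSubOneOn a S :=
  prod_le_prod' fun i _ => by split_ifs <;> grind

lemma prodSubOneOn_lt_of_ssubset (ha : ∀ i, 2 ≤ a i) {S T : Finset ι} (h : S ⊂ T) :
    prodSubOneOn a T < prodSubOneOn a S := by
  obtain ⟨j, hjT, hjS⟩ := exists_of_ssubset h
  refine prod_lt_prod (fun i _ => by have := ha i; split_ifs <;> omega)
    (fun i _ => by split_ifs <;> grind) ⟨j, mem_univ j, ?_⟩
  have := ha j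
  simp only [hjT, hjS, if_true, if_false]
  omega

lemma prodSubOneOn_univ_erase_sub_univ (ha : ∀ i, 1 ≤ a i) (k : ι) :
    prodSubOneOn a (univ.erase k) - prodSubOneOn a univ = ∏ i ∈ univ.erase k, (a i - 1) := by
  have herase : prodSubOneOn a (univ.erase k) = a k * ∏ i ∈ univ.erase k, (a i - 1) := by
    rw [prodSubOneOn, ← mul_prod_erase univ _ (mem_univ k)]
    congr 1
    · simp
    · exact prod_congr rfl fun i hi => if_pos hi
  have huniv : prodSubOneOn a univ = (a k - 1) * ∏ i ∈ univ.erase k, (a i - 1) := by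
    simp only [prodSubOneOn, mem_univ, if_true]
    exact (mul_prod_erase univ _ (mem_univ k)).symm
  rw [herase, huniv, ← Nat.sub_mul, Nat.sub_sub_self (ha k), one_mul]

lemma prodSubOneOn_univ_erase_lt_of_ne (ha : ∀ i, 2 ≤ a i) {L : ι} (hL : ∀ j ≠ L, a j < a L)
    {S : Finset ι} (hS : S ≠ univ) (hSL : S ≠ univ.erase L) :
    prodSubOneOn a (univ.erase L) < prodSubOneOn a S := by
  obtain ⟨j, hj⟩ : ∃ j, j ∉ S := by simpa [eq_univ_iff_forall] using hS
  have hSj : S ⊆ univ.erase j := fun i hi => mem_erase.2 ⟨ne_of_mem_of_not_mem hi hj, mem_univ i⟩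
  obtain rfl | hjL := eq_or_ne j L
  · exact prodSubOneOn_lt_of_ssubset ha (ssubset_of_subset_of_ne hSj hSL)
  have ha1 : ∀ i, 1 ≤ a i := fun i => (ha i).trans' one_le_two
  have hLj : prodSubOneOn a (univ.erase L) < prodSubOneOn a (univ.erase j) := by
    refine lt_of_tsub_lt_tsub_right (c := prodSubOneOn a univ) ?_
    rw [prodSubOneOn_univ_erase_sub_univ ha1, prodSubOneOn_univ_erase_sub_univ ha1]
    exact prod_erase_lt_prod_erase (fun i => by have := ha i; omega)
      (by have := hL j hjL; have := ha j; omega)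
  exact hLj.trans_le (prodSubOneOn_le_of_subset hSj)

end ProdSubOneOn

section PiField
variable {ι : Type*} {K : ι → Type*}

lemma Pi.isUnit_iff_forall_ne_zero [∀ i, GroupWithZero (K i)] {f : Π i, K i} :
    IsUnit f ↔ ∀ i, f i ≠ 0 := by
  simp [Pi.isUnit_iff]

lemma Pi.isCoprime_iff_forall_ne_zero [∀ i, Semifield (K i)] {f g : Π i, K i} :
    IsCoprime f g ↔ ∀ i, f i ≠ 0 ∨ g i ≠ 0 := by
  refine ⟨fun h i => Semifield.isCoprime_iff.1 (h.map (Pi.evalRingHom K i)), fun h => ?_⟩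
  choose u v huv using fun i => Semifield.isCoprime_iff.2 (h i)
  exact ⟨u, v, funext huv⟩

end PiField

lemma pairwise_coprime_of_prime {ι : Type*} {p : ι → ℕ} (hp : ∀ i, (p i).Prime)
    (hinj : p.Injective) : Pairwise (Function.onFun Nat.Coprime p) :=
  fun i j hij => (Nat.coprime_primes (hp i) (hp j)).2 (hinj.ne hij)

section CRT
variable {m : ℕ} {p : Fin m → ℕ}

noncomputable def crtEquiv (hp : ∀ i, (p i).Prime) (hinj : p.Injective) :
    ZMod (NN m p) ≃+* Π i, ZMod (p i) :=
  ZMod.prodEquivPi p (pairwise_coprime_of_prime hp hinj)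

lemma mem_Z_iff (hp : ∀ i, (p i).Prime) (hinj : p.Injective) {x : ZMod (NN m p)} {i : Fin m} :
    i ∈ Z m p x ↔ crtEquiv hp hinj x i = 0 := by
  rw [Z, mem_filter, crtEquiv, ZMod.prodEquivPi_apply]
  exact and_iff_right (mem_univ i)

lemma Z_eq_univ_iff (hp : ∀ i, (p i).Prime) (hinj : p.Injective) {x : ZMod (NN m p)} :
    Z m p x = univ ↔ x = 0 := by
  rw [← (crtEquiv hp hinj).map_eq_zero_iff, funext_iff, eq_univ_iff_forall]
  simp [mem_Z_iff hp hinj]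

lemma Z_eq_empty_iff (hp : ∀ i, (p i).Prime) (hinj : p.Injective) {x : ZMod (NN m p)} :
    Z m p x = ∅ ↔ IsUnit x := by
  have := fun i => Fact.mk (hp i)
  rw [← MulEquiv.isUnit_map (crtEquiv hp hinj), Pi.isUnit_iff_forall_ne_zero,
    eq_empty_iff_forall_notMem]
  simp [mem_Z_iff hp hinj]

lemma span_pair_eq_top_iff (hp : ∀ i, (p i).Prime) (hinj : p.Injective) {x y : ZMod (NN m p)} :
    Ideal.span {x, y} = ⊤ ↔ Disjoint (Z m p x) (Z m p y) := by
  have := fun i => Fact.mk (hp i)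
  have hcop : IsCoprime x y ↔ IsCoprime (crtEquiv hp hinj x) (crtEquiv hp hinj y) :=
    ⟨fun h => h.map (crtEquiv hp hinj).toRingHom,
      fun h => by simpa using h.map (crtEquiv hp hinj).symm.toRingHom⟩
  rw [Ideal.eq_top_iff_one, Ideal.mem_span_pair, ← IsCoprime, hcop,
    Pi.isCoprime_iff_forall_ne_zero, disjoint_left]
  simp [mem_Z_iff hp hinj, or_iff_not_imp_left]

lemma exists_Z_eq (hp : ∀ i, (p i).Prime) (hinj : p.Injective) (S : Finset (Fin m)) :
    ∃ x : ZMod (NN m p), Z m p x = S := by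
  have := fun i => Fact.mk (hp i)
  refine ⟨(crtEquiv hp hinj).symm fun i => if i ∈ S then 0 else 1, ?_⟩
  ext i
  simp [mem_Z_iff hp hinj]

lemma ncard_disjoint_Z (hp : ∀ i, (p i).Prime) (hinj : p.Injective) (S : Finset (Fin m)) :
    {y : ZMod (NN m p) | Disjoint S (Z m p y)}.ncard = prodSubOneOn p S := by
  have := fun i => NeZero.mk (hp i).ne_zero
  have : NeZero (NN m p) := ⟨prod_ne_zero_iff.2 fun i _ => (hp i).ne_zero⟩
  rw [Set.ncard_eq_toFinset_card', Set.toFinset_ofPred,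
    card_equiv (crtEquiv hp hinj).toEquiv (t := Fintype.piFinset fun i => {b | i ∈ S → b ≠ 0}),
    Fintype.card_piFinset]
  · refine prod_congr rfl fun i _ => ?_
    split_ifs with hi <;> simp [hi, filter_ne']
  · intro y
    simp [disjoint_left, mem_Z_iff hp hinj]

end CRT

lemma minDeg_eq_of_isLeast {V : Type*} {G : SimpleGraph V} {d : ℕ}
    (hx : ∃ x, (G.neighborSet x).ncard = d) (hle : ∀ x, d ≤ (G.neighborSet x).ncard) :
    minDeg G = d :=
  IsLeast.csInf_eq ⟨hx, by rintro _ ⟨x, rfl⟩; exact hle x⟩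

section G2
variable {m : ℕ} {p : Fin m → ℕ}

lemma Z_ne_univ (hp : ∀ i, (p i).Prime) (hinj : p.Injective) (x : Vtx m p) :
    Z m p x.1 ≠ univ :=
  fun h => x.2.1 ((Z_eq_univ_iff hp hinj).1 h)

lemma Z_nonempty (hp : ∀ i, (p i).Prime) (hinj : p.Injective) (x : Vtx m p) :
    (Z m p x.1).Nonempty :=
  nonempty_iff_ne_empty.2 fun h => x.2.2 ((Z_eq_empty_iff hp hinj).1 h)

lemma exists_vertex_Z_eq (hp : ∀ i, (p i).Prime) (hinj : p.Injective) {S : Finset (Fin m)}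
    (hS : S.Nonempty) (hSu : S ≠ univ) : ∃ x : Vtx m p, Z m p x.1 = S := by
  obtain ⟨y, rfl⟩ := exists_Z_eq hp hinj S
  exact ⟨⟨y, fun h => hSu ((Z_eq_univ_iff hp hinj).2 h),
    fun h => hS.ne_empty ((Z_eq_empty_iff hp hinj).2 h)⟩, rfl⟩

lemma G2_adj_iff (hp : ∀ i, (p i).Prime) (hinj : p.Injective) {x y : Vtx m p} :
    (G2 m p).Adj x y ↔ Disjoint (Z m p x.1) (Z m p y.1) := by
  change x ≠ y ∧ _ ↔ _
  rw [span_pair_eq_top_iff hp hinj]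
  refine ⟨And.right, fun h => ⟨?_, h⟩⟩
  rintro rfl
  exact (Z_nonempty hp hinj x).ne_empty (disjoint_self.1 h)

lemma ncard_neighborSet_G2 (hp : ∀ i, (p i).Prime) (hinj : p.Injective) (x : Vtx m p) :
    ((G2 m p).neighborSet x).ncard = prodSubOneOn p (Z m p x.1) - prodSubOneOn p univ := by
  have : NeZero (NN m p) := ⟨prod_ne_zero_iff.2 fun i _ => (hp i).ne_zero⟩
  have himage : Subtype.val '' (G2 m p).neighborSet x =
      {y | Disjoint (Z m p x.1) (Z m p y)} \ {y | Disjoint univ (Z m p y)} := by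
    ext y
    simp only [Set.mem_image, SimpleGraph.mem_neighborSet, G2_adj_iff hp hinj, Set.mem_sdiff,
      Set.mem_ofPred_eq, Subtype.exists, exists_and_right, exists_eq_right, exists_prop, ne_eq,
      ← Z_eq_univ_iff hp hinj, ← Z_eq_empty_iff hp hinj]
    constructor
    · rintro ⟨⟨-, hne⟩, h⟩
      exact ⟨h, fun hd => hne (top_disjoint.1 hd)⟩
    · rintro ⟨h, hne⟩
      refine ⟨⟨fun hu => ?_, fun h0 => hne (top_disjoint.2 h0)⟩, h⟩
      rw [hu] at h
      exact (Z_nonempty hp hinj x).ne_empty (disjoint_top.1 h)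
  have hsub : {y | Disjoint univ (Z m p y)} ⊆ {y | Disjoint (Z m p x.1) (Z m p y)} :=
    fun y hy => hy.mono_left (subset_univ _)
  rw [← Set.ncard_image_of_injective _ Subtype.val_injective, himage, Set.ncard_sdiff hsub,
    ncard_disjoint_Z hp hinj, ncard_disjoint_Z hp hinj]

lemma ncard_neighborSet_G2_of_Z_eq_erase (hp : ∀ i, (p i).Prime) (hinj : p.Injective)
    {x : Vtx m p} {k : Fin m} (hx : Z m p x.1 = univ.erase k) :
    ((G2 m p).neighborSet x).ncard = ∏ i ∈ univ.erase k, (p i - 1) := by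
  rw [ncard_neighborSet_G2 hp hinj, hx, prodSubOneOn_univ_erase_sub_univ fun i => (hp i).one_le]

lemma prod_erase_lt_ncard_neighborSet_G2 (hp : ∀ i, (p i).Prime) (hinj : p.Injective)
    {L : Fin m} (hL : ∀ j ≠ L, p j < p L) {x : Vtx m p} (hx : Z m p x.1 ≠ univ.erase L) :
    ∏ i ∈ univ.erase L, (p i - 1) < ((G2 m p).neighborSet x).ncard := by
  rw [ncard_neighborSet_G2 hp hinj, ← prodSubOneOn_univ_erase_sub_univ fun i => (hp i).one_le]
  exact Nat.sub_lt_sub_right (prodSubOneOn_le_of_subset (subset_univ _))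
    (prodSubOneOn_univ_erase_lt_of_ne (fun i => (hp i).two_le) hL (Z_ne_univ hp hinj x) hx)

end G2

theorem stmt7 (m : ℕ) (hm : 2 ≤ m) (p : Fin m → ℕ) (hp : ∀ i, (p i).Prime)
    (hmono : StrictMono p) :
    minDeg (G2 m p) = ∏ i ∈ Finset.univ.erase (⟨m - 1, by omega⟩ : Fin m), (p i - 1) ∧
    ∀ x : Vtx m p,
      (((G2 m p).neighborSet x).ncard = ∏ i ∈ Finset.univ.erase (⟨m - 1, by omega⟩ : Fin m), (p i - 1) ↔
        Z m p x.1 = Finset.univ.erase (⟨m - 1, by omega⟩ : Fin m)) := by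
  set L : Fin m := ⟨m - 1, by omega⟩
  have hL : ∀ j ≠ L, p j < p L := fun j hj =>
    hmono (lt_of_le_of_ne (Fin.le_def.2 (Nat.le_sub_one_of_lt j.isLt)) hj)
  have hinj := hmono.injective
  obtain ⟨x₀, hx₀⟩ : ∃ x : Vtx m p, Z m p x.1 = univ.erase L :=
    exists_vertex_Z_eq hp hinj ⟨⟨0, by omega⟩, by simp [L, Fin.ext_iff]; omega⟩ (by simp)
  refine ⟨minDeg_eq_of_isLeast ⟨x₀, ncard_neighborSet_G2_of_Z_eq_erase hp hinj hx₀⟩ fun x => ?_,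
    fun x => ⟨fun h => ?_, ncard_neighborSet_G2_of_Z_eq_erase hp hinj⟩⟩
  · by_cases hx : Z m p x.1 = univ.erase L
    · exact (ncard_neighborSet_G2_of_Z_eq_erase hp hinj hx).ge
    · exact (prod_erase_lt_ncard_neighborSet_G2 hp hinj hL hx).le
  · by_contra hx
    exact (prod_erase_lt_ncard_neighborSet_G2 hp hinj hL hx).ne' h
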